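/- For the family of operators B_CHSH = a·σ⊗(b+b')·σ + a'·σ⊗(b-b')·σ with a,a',b,b' unit vectors in ℝ³, and any two-qubit density matrix ρ, the maximum of tr(ρ B_CHSH) over all choices of unit vectors equals 2√(m(ρ)), where m(ρ)=max_{j<k}(u_j+u_k) and u_j are the eigenvalues of T_ρᵀT_ρ with (T_ρ)_{nm}=tr(ρ σ_n⊗σ_m). -/

import Mathlib

open Matrix Kronecker Complex ComplexOrder

noncomputable section
open scoped Classical

/-- Pauli matrices. -/
def pauli : Fin 3 → Matrix (Fin 2) (Fin 2) ℂ
  | 0 => !![0, 1; 1, 0]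
  | 1 => !![0, -Complex.I; Complex.I, 0]
  | 2 => !![1, 0; 0, -1]

/-- Kronecker product of two one-qubit operators, reindexed to a 4×4 matrix. -/
def kron4 (A B : Matrix (Fin 2) (Fin 2) ℂ) : Matrix (Fin 4) (Fin 4) ℂ :=
  Matrix.reindex finProdFinEquiv finProdFinEquiv (A ⊗ₖ B)

/-- A density matrix: positive semidefinite with unit trace. -/
def IsDensity {n : ℕ} (ρ : Matrix (Fin n) (Fin n) ℂ) : Prop :=
  ρ.PosSemidef ∧ ρ.trace = 1

/-- The spin-flipped matrix ρ̃ = (σ₂⊗σ₂) ρ̄ (σ₂⊗σ₂). -/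
def tildeMat (ρ : Matrix (Fin 4) (Fin 4) ℂ) : Matrix (Fin 4) (Fin 4) ℂ :=
  kron4 (pauli 1) (pauli 1) * ρ.map (starRingEnd ℂ) * kron4 (pauli 1) (pauli 1)

/-- Positive square root of a positive semidefinite matrix (0 otherwise). -/
def msqrt {n : ℕ} (A : Matrix (Fin n) (Fin n) ℂ) : Matrix (Fin n) (Fin n) ℂ :=
  if h : A.PosSemidef then
    (h.1.eigenvectorUnitary : Matrix (Fin n) (Fin n) ℂ) *
      diagonal ((↑) ∘ (fun x => Real.sqrt x) ∘ h.1.eigenvalues) *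
      (star h.1.eigenvectorUnitary : Matrix (Fin n) (Fin n) ℂ)
  else 0

/-- ρ̂ = √(√ρ ρ̃ √ρ). -/
def hatMat (ρ : Matrix (Fin 4) (Fin 4) ℂ) : Matrix (Fin 4) (Fin 4) ℂ :=
  msqrt (msqrt ρ * tildeMat ρ * msqrt ρ)

/-- Eigenvalues of a Hermitian matrix (0 otherwise). -/
def evalsC {n : ℕ} (A : Matrix (Fin n) (Fin n) ℂ) : Fin n → ℝ :=
  if h : A.IsHermitian then h.eigenvalues else 0

/-- The concurrence C(ρ) = max(0, 2 λ_max(ρ̂) − tr ρ̂). -/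
def concurrence (ρ : Matrix (Fin 4) (Fin 4) ℂ) : ℝ :=
  max 0 (2 * (⨆ i, evalsC (hatMat ρ) i) - ∑ i, evalsC (hatMat ρ) i)

/-- Correlation matrix T_ρ with entries tr(ρ σₙ⊗σₘ). -/
def Tmat (ρ : Matrix (Fin 4) (Fin 4) ℂ) : Matrix (Fin 3) (Fin 3) ℝ :=
  fun n m => ((ρ * kron4 (pauli n) (pauli m)).trace).re

/-- U_ρ = T_ρᵀ T_ρ. -/
def Umat (ρ : Matrix (Fin 4) (Fin 4) ℂ) : Matrix (Fin 3) (Fin 3) ℝ :=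
  (Tmat ρ)ᵀ * Tmat ρ

/-- Eigenvalues of a real symmetric matrix (0 otherwise). -/
def evalsR {n : ℕ} (A : Matrix (Fin n) (Fin n) ℝ) : Fin n → ℝ :=
  if h : A.IsHermitian then h.eigenvalues else 0

/-- The Horodecki quantity m(ρ) = max_{j<k} (u_j + u_k). -/
def mval (ρ : Matrix (Fin 4) (Fin 4) ℂ) : ℝ :=
  (Finset.univ.filter (fun p : Fin 3 × Fin 3 => p.1 < p.2)).sup'
    (by decide) (fun p => evalsR (Umat ρ) p.1 + evalsR (Umat ρ) p.2)

/-- Normalized linear entropy S_L(ρ) = (4/3)(1 − tr ρ²). -/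
def linEntropy (ρ : Matrix (Fin 4) (Fin 4) ℂ) : ℝ :=
  (4/3) * (1 - ((ρ * ρ).trace).re)

/-- The class E₀ state with parameters a, b, c, θ. -/
def rhoE0 (a b c θ : ℝ) : Matrix (Fin 4) (Fin 4) ℂ :=
  !![0, 0, 0, 0;
     0, (a : ℂ), (c/2 : ℂ) * Complex.exp (θ * Complex.I), 0;
     0, (c/2 : ℂ) * Complex.exp (-θ * Complex.I), (b : ℂ), 0;
     0, 0, 0, ((1 - a - b : ℝ) : ℂ)]

/-- The maximal-CHSH-violation states ρ_MVB. -/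
def rhoMVB (β θ : ℝ) : Matrix (Fin 4) (Fin 4) ℂ :=
  rhoE0 (1/2) (1/2) (Real.sqrt (β - 1)) θ

/-- v·σ for a vector v ∈ ℝ³. -/
def vdotσ (v : Fin 3 → ℝ) : Matrix (Fin 2) (Fin 2) ℂ :=
  ∑ i, (v i : ℂ) • pauli i

/-- The Bell–CHSH operator. -/
def BCHSH (a a' b b' : Fin 3 → ℝ) : Matrix (Fin 4) (Fin 4) ℂ :=
  kron4 (vdotσ a) (vdotσ b + vdotσ b') + kron4 (vdotσ a') (vdotσ b - vdotσ b')

section ScalarLemmas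

lemma bessel3 (a b c d e f : ℝ) (h1 : a^2+b^2+c^2 = 1) (h2 : d^2+e^2+f^2 = 1)
    (h3 : a*d+b*e+c*f = 0) : a^2 + d^2 ≤ 1 := by
  have key : 1 - a^2 - d^2 = (b*f - c*e)^2 := by
    linear_combination (-(e^2+f^2))*h1 + (-(1-a^2))*h2 + (b*e+c*f-a*d)*h3
  nlinarith [sq_nonneg (b*f - c*e)]

lemma kyfan3 (u0 u1 u2 v0 v1 v2 m : ℝ) (hu0 : 0 ≤ u0) (hu1 : 0 ≤ u1) (hu2 : 0 ≤ u2)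
    (hv0 : 0 ≤ v0) (hv1 : 0 ≤ v1) (hv2 : 0 ≤ v2)
    (hb0 : v0 ≤ 1) (hb1 : v1 ≤ 1) (hb2 : v2 ≤ 1)
    (hs : v0 + v1 + v2 = 2)
    (h01 : u0 + u1 ≤ m) (h02 : u0 + u2 ≤ m) (h12 : u1 + u2 ≤ m) :
    u0*v0 + u1*v1 + u2*v2 ≤ m := by
  rcases le_total u0 u1 with h | h <;> rcases le_total u0 u2 with h' | h' <;>
    rcases le_total u1 u2 with h'' | h'' <;>
    nlinarith [mul_nonneg hu0 hv0, mul_nonneg hu1 hv1, mul_nonneg hu2 hv2]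

lemma maxb3 (u0 u1 u2 v0 v1 v2 m : ℝ) (hu0 : 0 ≤ u0) (hu1 : 0 ≤ u1) (hu2 : 0 ≤ u2)
    (hv0 : 0 ≤ v0) (hv1 : 0 ≤ v1) (hv2 : 0 ≤ v2)
    (hs : v0 + v1 + v2 = 1)
    (h01 : u0 + u1 ≤ m) (h02 : u0 + u2 ≤ m) (h12 : u1 + u2 ≤ m) :
    u0*v0 + u1*v1 + u2*v2 ≤ m := by
  rcases le_total u0 u1 with h | h <;> rcases le_total u0 u2 with h' | h' <;>
    rcases le_total u1 u2 with h'' | h'' <;>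
    nlinarith [mul_nonneg hu0 hv0, mul_nonneg hu1 hv1, mul_nonneg hu2 hv2]

lemma cs2 (r s t w : ℝ) : r*s + t*w ≤ Real.sqrt (r^2 + t^2) * Real.sqrt (s^2 + w^2) := by
  have h := Real.sum_mul_le_sqrt_mul_sqrt Finset.univ ![r, t] ![s, w]
  simpa [Fin.sum_univ_two] using h

end ScalarLemmas

section EigenLemmas

variable {M : Matrix (Fin 3) (Fin 3) ℝ} (hM : M.IsHermitian)

lemma dot_repr (x y : Fin 3 → ℝ) :
    x ⬝ᵥ y = ∑ i, hM.eigenvectorBasis.repr (WithLp.toLp 2 x) i * hM.eigenvectorBasis.repr (WithLp.toLp 2 y) i := by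
  have h := hM.eigenvectorBasis.repr.inner_map_map (WithLp.toLp 2 x) (WithLp.toLp 2 y)
  simp only [PiLp.inner_apply, RCLike.inner_apply, conj_trivial] at h
  simpa [dotProduct, mul_comm] using h.symm

lemma repr_mulVec (x : Fin 3 → ℝ) (i : Fin 3) :
    hM.eigenvectorBasis.repr (WithLp.toLp 2 (M *ᵥ x)) i = hM.eigenvalues i * hM.eigenvectorBasis.repr (WithLp.toLp 2 x) i := by
  rw [hM.eigenvectorBasis.repr_apply_apply, hM.eigenvectorBasis.repr_apply_apply]
  have h1 : (inner ℝ (hM.eigenvectorBasis i) (WithLp.toLp 2 (M *ᵥ x : Fin 3 → ℝ)))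
      = (hM.eigenvectorBasis i : Fin 3 → ℝ) ⬝ᵥ (M *ᵥ x) := by
    simp [PiLp.inner_apply, RCLike.inner_apply, dotProduct, mul_comm]
  have h2 : (inner ℝ (hM.eigenvectorBasis i) (WithLp.toLp 2 x) : ℝ)
      = (hM.eigenvectorBasis i : Fin 3 → ℝ) ⬝ᵥ x := by
    simp [PiLp.inner_apply, RCLike.inner_apply, dotProduct, mul_comm]
  rw [h1, h2, dotProduct_mulVec]
  have hsymm : Mᵀ = M := by
    rw [← Matrix.conjTranspose_eq_transpose_of_trivial]; exact hM
  have h3 : (hM.eigenvectorBasis i : Fin 3 → ℝ) ᵥ* M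
      = hM.eigenvalues i • (hM.eigenvectorBasis i : Fin 3 → ℝ) := by
    calc (hM.eigenvectorBasis i : Fin 3 → ℝ) ᵥ* M
        = (hM.eigenvectorBasis i : Fin 3 → ℝ) ᵥ* (Mᵀ)ᵀ := by rw [transpose_transpose]
      _ = Mᵀ *ᵥ (hM.eigenvectorBasis i : Fin 3 → ℝ) := vecMul_transpose _ _
      _ = M *ᵥ (hM.eigenvectorBasis i : Fin 3 → ℝ) := by rw [hsymm]
      _ = hM.eigenvalues i • (hM.eigenvectorBasis i : Fin 3 → ℝ) := hM.mulVec_eigenvectorBasis i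
  rw [h3, smul_dotProduct, smul_eq_mul]

lemma Qform (x : Fin 3 → ℝ) :
    x ⬝ᵥ (M *ᵥ x) = ∑ i, hM.eigenvalues i * (hM.eigenvectorBasis.repr (WithLp.toLp 2 x) i)^2 := by
  rw [dot_repr hM x (M *ᵥ x)]
  refine Finset.sum_congr rfl fun i _ => ?_
  rw [repr_mulVec]; ring

lemma dot_eq_sum_sq (x : Fin 3 → ℝ) : x ⬝ᵥ x = ∑ i, x i^2 := by
  simp [dotProduct, sq]

lemma unit_bound (m : ℝ) (hu : ∀ i, 0 ≤ hM.eigenvalues i)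
    (hpairs : ∀ j k : Fin 3, j < k → hM.eigenvalues j + hM.eigenvalues k ≤ m)
    (x : Fin 3 → ℝ) (hx : ∑ i, x i^2 = 1) :
    x ⬝ᵥ (M *ᵥ x) ≤ m := by
  have hγ : ∑ i, (hM.eigenvectorBasis.repr (WithLp.toLp 2 x) i)^2 = 1 := by
    have h := (dot_repr hM x x).symm
    rw [dot_eq_sum_sq, hx] at h
    rw [← h]; exact Finset.sum_congr rfl fun i _ => by ring
  rw [Qform hM x]
  rw [Fin.sum_univ_three] at hγ ⊢
  exact maxb3 _ _ _ _ _ _ m (hu 0) (hu 1) (hu 2) (sq_nonneg _) (sq_nonneg _) (sq_nonneg _)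
    hγ (hpairs 0 1 (by decide)) (hpairs 0 2 (by decide)) (hpairs 1 2 (by decide))

lemma pair_bound (m : ℝ) (hu : ∀ i, 0 ≤ hM.eigenvalues i)
    (hpairs : ∀ j k : Fin 3, j < k → hM.eigenvalues j + hM.eigenvalues k ≤ m)
    (x y : Fin 3 → ℝ) (hx : ∑ i, x i^2 = 1) (hy : ∑ i, y i^2 = 1) (hxy : x ⬝ᵥ y = 0) :
    x ⬝ᵥ (M *ᵥ x) + y ⬝ᵥ (M *ᵥ y) ≤ m := by
  set γ : Fin 3 → ℝ := fun i => hM.eigenvectorBasis.repr (WithLp.toLp 2 x) i with hγdef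
  set δ : Fin 3 → ℝ := fun i => hM.eigenvectorBasis.repr (WithLp.toLp 2 y) i with hδdef
  have hγ : γ 0^2 + γ 1^2 + γ 2^2 = 1 := by
    have h := (dot_repr hM x x).symm
    rw [dot_eq_sum_sq, hx] at h
    rw [Fin.sum_univ_three] at h; simp only [hγdef]; nlinarith [h]
  have hδ : δ 0^2 + δ 1^2 + δ 2^2 = 1 := by
    have h := (dot_repr hM y y).symm
    rw [dot_eq_sum_sq, hy] at h
    rw [Fin.sum_univ_three] at h; simp only [hδdef]; nlinarith [h]
  have hod : γ 0 * δ 0 + γ 1 * δ 1 + γ 2 * δ 2 = 0 := by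
    have h := (dot_repr hM x y)
    rw [hxy, Fin.sum_univ_three] at h; simp only [hγdef, hδdef]; linarith [h]
  have hb0 : γ 0^2 + δ 0^2 ≤ 1 := bessel3 _ _ _ _ _ _ hγ hδ hod
  have hb1 : γ 1^2 + δ 1^2 ≤ 1 := by
    refine bessel3 (γ 1) (γ 0) (γ 2) (δ 1) (δ 0) (δ 2) (by linarith) (by linarith) (by linarith)
  have hb2 : γ 2^2 + δ 2^2 ≤ 1 := by
    refine bessel3 (γ 2) (γ 0) (γ 1) (δ 2) (δ 0) (δ 1) (by linarith) (by linarith) (by linarith)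
  rw [Qform hM x, Qform hM y, Fin.sum_univ_three, Fin.sum_univ_three]
  have := kyfan3 (hM.eigenvalues 0) (hM.eigenvalues 1) (hM.eigenvalues 2)
    (γ 0^2 + δ 0^2) (γ 1^2 + δ 1^2) (γ 2^2 + δ 2^2) m (hu 0) (hu 1) (hu 2)
    (by positivity) (by positivity) (by positivity) hb0 hb1 hb2 (by linarith)
    (hpairs 0 1 (by decide)) (hpairs 0 2 (by decide)) (hpairs 1 2 (by decide))
  simp only [hγdef, hδdef] at this ⊢
  linarith [this]

end EigenLemmas

section Tlemmas

lemma Q_eq (T : Matrix (Fin 3) (Fin 3) ℝ) (x : Fin 3 → ℝ) :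
    (T *ᵥ x) ⬝ᵥ (T *ᵥ x) = x ⬝ᵥ ((Tᵀ*T) *ᵥ x) := by
  calc (T *ᵥ x) ⬝ᵥ (T *ᵥ x)
      = (x ᵥ* Tᵀ) ⬝ᵥ (T *ᵥ x) := by rw [vecMul_transpose]
    _ = x ⬝ᵥ (Tᵀ *ᵥ (T *ᵥ x)) := (dotProduct_mulVec _ _ _).symm
    _ = x ⬝ᵥ ((Tᵀ*T) *ᵥ x) := by rw [mulVec_mulVec]

lemma Q_nonneg (T : Matrix (Fin 3) (Fin 3) ℝ) (x : Fin 3 → ℝ) :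
    0 ≤ x ⬝ᵥ ((Tᵀ*T) *ᵥ x) := by
  rw [← Q_eq, dot_eq_sum_sq]
  positivity

lemma ub_main (T : Matrix (Fin 3) (Fin 3) ℝ) (m : ℝ) (hM : (Tᵀ*T).IsHermitian)
    (hu : ∀ i, 0 ≤ hM.eigenvalues i)
    (hpairs : ∀ j k : Fin 3, j < k → hM.eigenvalues j + hM.eigenvalues k ≤ m)
    (a a' b b' : Fin 3 → ℝ)
    (ha : ∑ i, a i ^ 2 = 1) (ha' : ∑ i, a' i ^ 2 = 1)
    (hb : ∑ i, b i ^ 2 = 1) (hb' : ∑ i, b' i ^ 2 = 1) :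
    a ⬝ᵥ (T *ᵥ (b + b')) + a' ⬝ᵥ (T *ᵥ (b - b')) ≤ 2 * Real.sqrt m := by
  have hm0 : 0 ≤ m := le_trans (add_nonneg (hu 0) (hu 1)) (hpairs 0 1 (by decide))
  set c : Fin 3 → ℝ := b + b' with hcdef
  set c' : Fin 3 → ℝ := b - b' with hc'def
  -- Cauchy-Schwarz step
  have cs_step : ∀ v : Fin 3 → ℝ, (∑ i, v i^2 = 1) → ∀ w : Fin 3 → ℝ,
      v ⬝ᵥ (T *ᵥ w) ≤ Real.sqrt (w ⬝ᵥ ((Tᵀ*T) *ᵥ w)) := by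
    intro v hv w
    have h := Real.sum_mul_le_sqrt_mul_sqrt Finset.univ v (T *ᵥ w)
    have heq : ∑ i, ((T *ᵥ w) i)^2 = w ⬝ᵥ ((Tᵀ*T) *ᵥ w) := by
      rw [← Q_eq, dot_eq_sum_sq]
    rw [hv, heq, Real.sqrt_one, one_mul] at h
    exact h
  have h1 : a ⬝ᵥ (T *ᵥ c) ≤ Real.sqrt (c ⬝ᵥ ((Tᵀ*T) *ᵥ c)) := cs_step a ha c
  have h2 : a' ⬝ᵥ (T *ᵥ c') ≤ Real.sqrt (c' ⬝ᵥ ((Tᵀ*T) *ᵥ c')) := cs_step a' ha' c'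
  have hsum : (∑ i, c i^2) + (∑ i, c' i^2) = 4 := by
    simp only [hcdef, hc'def, Pi.add_apply, Pi.sub_apply, Fin.sum_univ_three] at hb hb' ⊢
    nlinarith [hb, hb']
  have horth : c ⬝ᵥ c' = 0 := by
    simp only [hcdef, hc'def, dotProduct, Pi.add_apply, Pi.sub_apply, Fin.sum_univ_three]
      at hb hb' ⊢
    nlinarith [hb, hb']
  have key : Real.sqrt (c ⬝ᵥ ((Tᵀ*T) *ᵥ c)) + Real.sqrt (c' ⬝ᵥ ((Tᵀ*T) *ᵥ c'))
      ≤ 2 * Real.sqrt m := by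
    have sqrt4m : Real.sqrt (4 * m) = 2 * Real.sqrt m := by
      rw [show (4:ℝ) * m = 2^2 * m by ring, Real.sqrt_mul (by positivity),
        Real.sqrt_sq (by norm_num)]
    have zero_case : ∀ v w : Fin 3 → ℝ, (∑ i, v i^2) = 0 → (∑ i, w i^2) = 4 →
        Real.sqrt (v ⬝ᵥ ((Tᵀ*T) *ᵥ v)) + Real.sqrt (w ⬝ᵥ ((Tᵀ*T) *ᵥ w))
          ≤ 2 * Real.sqrt m := by
      intro v w hv hw
      have hv0 : v = 0 := by
        funext i
        have hnn : ∀ j ∈ Finset.univ, 0 ≤ v j ^2 := fun j _ => sq_nonneg _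
        have hz := (Finset.sum_eq_zero_iff_of_nonneg hnn).1 hv i (Finset.mem_univ i)
        exact (pow_eq_zero_iff two_ne_zero).1 hz
      have hQv : v ⬝ᵥ ((Tᵀ*T) *ᵥ v) = 0 := by rw [hv0]; simp
      set x : Fin 3 → ℝ := fun i => w i / 2 with hxdef
      have hx : ∑ i, x i^2 = 1 := by
        simp only [hxdef, div_pow, ← Finset.sum_div, hw]; norm_num
      have hwx : w = (2:ℝ) • x := by funext i; simp [hxdef]; ring
      have hQw : w ⬝ᵥ ((Tᵀ*T) *ᵥ w) = 4 * (x ⬝ᵥ ((Tᵀ*T) *ᵥ x)) := by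
        rw [hwx, mulVec_smul, smul_dotProduct, dotProduct_smul, smul_eq_mul, smul_eq_mul]
        ring
      rw [hQv, hQw, Real.sqrt_zero, zero_add, ← sqrt4m]
      refine Real.sqrt_le_sqrt ?_
      have := unit_bound hM m hu hpairs x hx
      linarith
    by_cases hnc : (∑ i, c i^2) = 0
    · exact zero_case c c' hnc (by linarith)
    by_cases hnc' : (∑ i, c' i^2) = 0
    · rw [add_comm]; exact zero_case c' c hnc' (by linarith)
    · -- both nonzero
      have hpnn : 0 ≤ ∑ i, c i^2 := Finset.sum_nonneg fun i _ => sq_nonneg _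
      have hqnn : 0 ≤ ∑ i, c' i^2 := Finset.sum_nonneg fun i _ => sq_nonneg _
      have hp : 0 < ∑ i, c i^2 := lt_of_le_of_ne hpnn (Ne.symm hnc)
      have hq : 0 < ∑ i, c' i^2 := lt_of_le_of_ne hqnn (Ne.symm hnc')
      set p := ∑ i, c i^2 with hpdef
      set q := ∑ i, c' i^2 with hqdef
      have hsp : Real.sqrt p > 0 := Real.sqrt_pos.2 hp
      have hsq : Real.sqrt q > 0 := Real.sqrt_pos.2 hq
      have hsp2 : (Real.sqrt p)^2 = p := Real.sq_sqrt hp.le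
      have hsq2 : (Real.sqrt q)^2 = q := Real.sq_sqrt hq.le
      set x : Fin 3 → ℝ := fun i => c i / Real.sqrt p with hxdef
      set y : Fin 3 → ℝ := fun i => c' i / Real.sqrt q with hydef
      have hx : ∑ i, x i^2 = 1 := by
        simp only [hxdef, div_pow, ← Finset.sum_div, hsp2, ← hpdef]
        exact div_self hp.ne'
      have hy : ∑ i, y i^2 = 1 := by
        simp only [hydef, div_pow, ← Finset.sum_div, hsq2, ← hqdef]
        exact div_self hq.ne'
      have hxy : x ⬝ᵥ y = 0 := by
        simp only [hxdef, hydef, dotProduct, Fin.sum_univ_three] at horth ⊢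
        field_simp
        linarith [horth]
      have hcx : c = Real.sqrt p • x := by
        funext i; simp only [hxdef, Pi.smul_apply, smul_eq_mul]
        field_simp
      have hcy : c' = Real.sqrt q • y := by
        funext i; simp only [hydef, Pi.smul_apply, smul_eq_mul]
        field_simp
      have hQc : c ⬝ᵥ ((Tᵀ*T) *ᵥ c) = p * (x ⬝ᵥ ((Tᵀ*T) *ᵥ x)) := by
        rw [hcx, mulVec_smul, smul_dotProduct, dotProduct_smul, smul_eq_mul, smul_eq_mul,
          ← mul_assoc, ← sq, hsp2]
      have hQc' : c' ⬝ᵥ ((Tᵀ*T) *ᵥ c') = q * (y ⬝ᵥ ((Tᵀ*T) *ᵥ y)) := by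
        rw [hcy, mulVec_smul, smul_dotProduct, dotProduct_smul, smul_eq_mul, smul_eq_mul,
          ← mul_assoc, ← sq, hsq2]
      have hQx := Q_nonneg T x
      have hQy := Q_nonneg T y
      have e1 : Real.sqrt (c ⬝ᵥ ((Tᵀ*T) *ᵥ c))
          = Real.sqrt p * Real.sqrt (x ⬝ᵥ ((Tᵀ*T) *ᵥ x)) := by
        rw [hQc, Real.sqrt_mul hpnn]
      have e2 : Real.sqrt (c' ⬝ᵥ ((Tᵀ*T) *ᵥ c'))
          = Real.sqrt q * Real.sqrt (y ⬝ᵥ ((Tᵀ*T) *ᵥ y)) := by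
        rw [hQc', Real.sqrt_mul hqnn]
      rw [e1, e2]
      have hcs := cs2 (Real.sqrt p) (Real.sqrt (x ⬝ᵥ ((Tᵀ*T) *ᵥ x)))
        (Real.sqrt q) (Real.sqrt (y ⬝ᵥ ((Tᵀ*T) *ᵥ y)))
      rw [hsp2, hsq2, Real.sq_sqrt hQx, Real.sq_sqrt hQy] at hcs
      refine le_trans hcs ?_
      have hpq4 : p + q = 4 := by linarith
      rw [hpq4, show (4:ℝ) = 2^2 by norm_num, Real.sqrt_sq (by norm_num : (0:ℝ) ≤ 2)]
      have hpb := pair_bound hM m hu hpairs x y hx hy hxy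
      have := Real.sqrt_le_sqrt hpb
      linarith [this]
  linarith [h1, h2, key]

lemma inner_euclid (x y : EuclideanSpace ℝ (Fin 3)) :
    (inner ℝ x y : ℝ) = (x : Fin 3 → ℝ) ⬝ᵥ (y : Fin 3 → ℝ) := by
  simp [PiLp.inner_apply, RCLike.inner_apply, dotProduct, mul_comm]

lemma attain_main (T : Matrix (Fin 3) (Fin 3) ℝ) (hM : (Tᵀ*T).IsHermitian)
    (hu : ∀ i, 0 ≤ hM.eigenvalues i) (m : ℝ) (j k : Fin 3) (hjk : j ≠ k)
    (hm : m = hM.eigenvalues j + hM.eigenvalues k) :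
    ∃ a a' b b' : Fin 3 → ℝ, (∑ i, a i ^ 2 = 1) ∧ (∑ i, a' i ^ 2 = 1) ∧
      (∑ i, b i ^ 2 = 1) ∧ (∑ i, b' i ^ 2 = 1) ∧
      a ⬝ᵥ (T *ᵥ (b + b')) + a' ⬝ᵥ (T *ᵥ (b - b')) = 2 * Real.sqrt m := by
  have hON := hM.eigenvectorBasis.orthonormal
  rw [orthonormal_iff_ite] at hON
  set e : Fin 3 → ℝ := (hM.eigenvectorBasis j : Fin 3 → ℝ) with hedef
  set e' : Fin 3 → ℝ := (hM.eigenvectorBasis k : Fin 3 → ℝ) with he'def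
  have hee : e ⬝ᵥ e = 1 := by
    have h := hON j j
    rw [inner_euclid] at h; simpa using h
  have he'e' : e' ⬝ᵥ e' = 1 := by
    have h := hON k k
    rw [inner_euclid] at h; simpa using h
  have hee' : e ⬝ᵥ e' = 0 := by
    have h := hON j k
    rw [inner_euclid] at h; simpa [hjk] using h
  have hMe : (Tᵀ*T) *ᵥ e = hM.eigenvalues j • e := hM.mulVec_eigenvectorBasis j
  have hMe' : (Tᵀ*T) *ᵥ e' = hM.eigenvalues k • e' := hM.mulVec_eigenvectorBasis k
  have hQe : (T *ᵥ e) ⬝ᵥ (T *ᵥ e) = hM.eigenvalues j := by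
    rw [Q_eq, hMe, dotProduct_smul, smul_eq_mul, hee, mul_one]
  have hQe' : (T *ᵥ e') ⬝ᵥ (T *ᵥ e') = hM.eigenvalues k := by
    rw [Q_eq, hMe', dotProduct_smul, smul_eq_mul, he'e', mul_one]
  have heunit : ∑ i, e i ^ 2 = 1 := by rw [← dot_eq_sum_sq, hee]
  have he'unit : ∑ i, e' i ^ 2 = 1 := by rw [← dot_eq_sum_sq, he'e']
  set σj := Real.sqrt (hM.eigenvalues j) with hσjdef
  set σk := Real.sqrt (hM.eigenvalues k) with hσkdef
  have hσj2 : σj^2 = hM.eigenvalues j := Real.sq_sqrt (hu j)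
  have hσk2 : σk^2 = hM.eigenvalues k := Real.sq_sqrt (hu k)
  -- the `a`-choice trick
  have ha_choice : ∀ (v : Fin 3 → ℝ) (σ : ℝ), 0 ≤ σ → σ^2 = (T *ᵥ v) ⬝ᵥ (T *ᵥ v) →
      ∃ a : Fin 3 → ℝ, (∑ i, a i ^ 2 = 1) ∧ a ⬝ᵥ (T *ᵥ v) = σ := by
    intro v σ hσnn hσ2
    by_cases hz : T *ᵥ v = 0
    · refine ⟨![1,0,0], by simp [Fin.sum_univ_three], ?_⟩
      have hσ0 : σ = 0 := by
        have : σ^2 = 0 := by rw [hσ2, hz]; simp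
        exact pow_eq_zero_iff two_ne_zero |>.1 this
      rw [hz, dotProduct_zero, hσ0]
    · have hσpos : 0 < σ := by
        rcases lt_or_eq_of_le hσnn with h | h
        · exact h
        · exfalso
          apply hz
          have h2 : (T *ᵥ v) ⬝ᵥ (T *ᵥ v) = 0 := by rw [← hσ2, ← h]; ring
          rw [dot_eq_sum_sq] at h2
          funext i
          have hnn : ∀ l ∈ Finset.univ, 0 ≤ ((T *ᵥ v) l) ^2 := fun l _ => sq_nonneg _
          have := (Finset.sum_eq_zero_iff_of_nonneg hnn).1 h2 i (Finset.mem_univ i)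
          exact (pow_eq_zero_iff two_ne_zero).1 this
      refine ⟨σ⁻¹ • (T *ᵥ v), ?_, ?_⟩
      · have : ∑ i, (σ⁻¹ • (T *ᵥ v)) i ^ 2 = σ⁻¹^2 * ∑ i, ((T *ᵥ v) i)^2 := by
          rw [Finset.mul_sum]
          exact Finset.sum_congr rfl fun i _ => by simp [mul_pow]
        rw [this, ← dot_eq_sum_sq, ← hσ2]
        field_simp
      · rw [smul_dotProduct, smul_eq_mul, ← hσ2]
        field_simp
  by_cases hmz : m = 0
  · -- degenerate case
    have huj : hM.eigenvalues j = 0 := by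
      have := hu j; have := hu k; linarith [hm, hmz]
    have hTe : T *ᵥ e = 0 := by
      have h2 : (T *ᵥ e) ⬝ᵥ (T *ᵥ e) = 0 := by rw [hQe, huj]
      rw [dot_eq_sum_sq] at h2
      funext i
      have hnn : ∀ l ∈ Finset.univ, 0 ≤ ((T *ᵥ e) l) ^2 := fun l _ => sq_nonneg _
      have := (Finset.sum_eq_zero_iff_of_nonneg hnn).1 h2 i (Finset.mem_univ i)
      exact (pow_eq_zero_iff two_ne_zero).1 this
    refine ⟨![1,0,0], ![1,0,0], e, e, by simp [Fin.sum_univ_three], by simp [Fin.sum_univ_three],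
      heunit, heunit, ?_⟩
    have h1 : e + e = (2:ℝ) • e := by funext i; simp; ring
    have h2 : e - e = (0 : Fin 3 → ℝ) := by funext i; simp
    rw [h1, h2, mulVec_smul, hTe, mulVec_zero, dotProduct_zero, smul_zero, dotProduct_zero,
      hmz, Real.sqrt_zero]
    ring
  · have hmpos : 0 < m := by
      rcases lt_or_eq_of_le (by rw [hm]; exact add_nonneg (hu j) (hu k) : (0:ℝ) ≤ m) with h | h
      · exact h
      · exact absurd h.symm hmz
    set σm := Real.sqrt m with hσmdef
    have hσmpos : 0 < σm := Real.sqrt_pos.2 hmpos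
    have hσm2 : σm^2 = m := Real.sq_sqrt hmpos.le
    set s := 2*σj/σm with hsdef
    set t := 2*σk/σm with htdef
    set b : Fin 3 → ℝ := fun i => (s * e i + t * e' i)/2 with hbdef
    set b' : Fin 3 → ℝ := fun i => (s * e i - t * e' i)/2 with hb'def
    have hst : s^2/4 + t^2/4 = 1 := by
      have : s^2/4 + t^2/4 = (σj^2 + σk^2)/σm^2 := by
        rw [hsdef, htdef]; field_simp; ring
      rw [this, hσj2, hσk2, hσm2, ← hm, div_self hmz]
    have heunit3 : e 0^2 + e 1^2 + e 2^2 = 1 := by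
      rw [← heunit, Fin.sum_univ_three]
    have he'unit3 : e' 0^2 + e' 1^2 + e' 2^2 = 1 := by
      rw [← he'unit, Fin.sum_univ_three]
    have horth3 : e 0 * e' 0 + e 1 * e' 1 + e 2 * e' 2 = 0 := by
      rw [← hee']; simp [dotProduct, Fin.sum_univ_three]
    have hbunit : ∑ i, b i ^ 2 = 1 := by
      simp only [hbdef, Fin.sum_univ_three]
      linear_combination (s^2/4)*heunit3 + (t^2/4)*he'unit3 + (s*t/2)*horth3 + hst
    have hb'unit : ∑ i, b' i ^ 2 = 1 := by
      simp only [hb'def, Fin.sum_univ_three]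
      linear_combination (s^2/4)*heunit3 + (t^2/4)*he'unit3 + (-(s*t)/2)*horth3 + hst
    obtain ⟨a, haunit, haval⟩ := ha_choice e σj (Real.sqrt_nonneg _) (by rw [hσj2, hQe])
    obtain ⟨a', ha'unit, ha'val⟩ := ha_choice e' σk (Real.sqrt_nonneg _) (by rw [hσk2, hQe'])
    refine ⟨a, a', b, b', haunit, ha'unit, hbunit, hb'unit, ?_⟩
    have hbb : b + b' = s • e := by
      funext i; simp only [hbdef, hb'def, Pi.add_apply, Pi.smul_apply, smul_eq_mul]; ring
    have hbb' : b - b' = t • e' := by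
      funext i; simp only [hbdef, hb'def, Pi.sub_apply, Pi.smul_apply, smul_eq_mul]; ring
    rw [hbb, hbb', mulVec_smul, mulVec_smul, dotProduct_smul, dotProduct_smul,
      smul_eq_mul, smul_eq_mul, haval, ha'val]
    have : s * σj + t * σk = 2 * (σj^2 + σk^2)/σm := by
      rw [hsdef, htdef]; field_simp
    rw [this, hσj2, hσk2, ← hm, ← hσm2]
    field_simp

end Tlemmas

section KronLemmas

lemma kron4_smul_left (r : ℂ) (A B : Matrix (Fin 2) (Fin 2) ℂ) :
    kron4 (r • A) B = r • kron4 A B := by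
  simp [kron4, Matrix.smul_kronecker, Matrix.submatrix_smul]

lemma kron4_smul_right (r : ℂ) (A B : Matrix (Fin 2) (Fin 2) ℂ) :
    kron4 A (r • B) = r • kron4 A B := by
  simp [kron4, Matrix.kronecker_smul, Matrix.submatrix_smul]

lemma kron4_add_left (A A' B : Matrix (Fin 2) (Fin 2) ℂ) :
    kron4 (A + A') B = kron4 A B + kron4 A' B := by
  simp [kron4, Matrix.add_kronecker, Matrix.submatrix_add]

lemma kron4_add_right (A B B' : Matrix (Fin 2) (Fin 2) ℂ) :
    kron4 A (B + B') = kron4 A B + kron4 A B' := by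
  simp [kron4, Matrix.kronecker_add, Matrix.submatrix_add]

lemma trace_kron_lin (ρ : Matrix (Fin 4) (Fin 4) ℂ) (u v : Fin 3 → ℝ) :
    ((ρ * kron4 (vdotσ u) (vdotσ v)).trace).re = u ⬝ᵥ (Tmat ρ *ᵥ v) := by
  have hexp : vdotσ u = (u 0 : ℂ) • pauli 0 + (u 1 : ℂ) • pauli 1 + (u 2 : ℂ) • pauli 2 := by
    simp [vdotσ, Fin.sum_univ_three]
  have hexp' : vdotσ v = (v 0 : ℂ) • pauli 0 + (v 1 : ℂ) • pauli 1 + (v 2 : ℂ) • pauli 2 := by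
    simp [vdotσ, Fin.sum_univ_three]
  rw [hexp, hexp']
  simp only [kron4_add_left, kron4_add_right, kron4_smul_left, kron4_smul_right,
    Matrix.mul_add, Matrix.trace_add, Matrix.mul_smul, Matrix.trace_smul, smul_smul]
  simp only [dotProduct, Matrix.mulVec, Tmat, Fin.sum_univ_three]
  simp [Complex.add_re, Complex.mul_re]
  ring

lemma vdotσ_add (v w : Fin 3 → ℝ) : vdotσ (v + w) = vdotσ v + vdotσ w := by
  simp [vdotσ, add_smul, Finset.sum_add_distrib, Pi.add_apply, Complex.ofReal_add]

lemma vdotσ_sub (v w : Fin 3 → ℝ) : vdotσ (v - w) = vdotσ v - vdotσ w := by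
  simp [vdotσ, sub_smul, Finset.sum_sub_distrib, Pi.sub_apply, Complex.ofReal_sub]

lemma trace_BCHSH (ρ : Matrix (Fin 4) (Fin 4) ℂ) (a a' b b' : Fin 3 → ℝ) :
    ((ρ * BCHSH a a' b b').trace).re
      = a ⬝ᵥ (Tmat ρ *ᵥ (b + b')) + a' ⬝ᵥ (Tmat ρ *ᵥ (b - b')) := by
  rw [BCHSH, ← vdotσ_add, ← vdotσ_sub, Matrix.mul_add, Matrix.trace_add, Complex.add_re,
    trace_kron_lin, trace_kron_lin]

end KronLemmas

/-- max over unit vectors of tr(ρ B_CHSH) equals 2√(m(ρ)). -/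
theorem sSup_CHSH_eq (ρ : Matrix (Fin 4) (Fin 4) ℂ) (hρ : IsDensity ρ) :
    sSup {x : ℝ | ∃ a a' b b' : Fin 3 → ℝ,
        (∑ i, a i ^ 2 = 1) ∧ (∑ i, a' i ^ 2 = 1) ∧ (∑ i, b i ^ 2 = 1) ∧
        (∑ i, b' i ^ 2 = 1) ∧ x = ((ρ * BCHSH a a' b b').trace).re} =
      2 * Real.sqrt (mval ρ) := by
  set T := Tmat ρ with hTdef
  have hU : (Tᵀ * T).IsHermitian := by
    have h := Matrix.isHermitian_conjTranspose_mul_self T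
    rwa [Matrix.conjTranspose_eq_transpose_of_trivial] at h
  have hpsd : (Tᵀ * T).PosSemidef := by
    have h := Matrix.posSemidef_conjTranspose_mul_self T
    rwa [Matrix.conjTranspose_eq_transpose_of_trivial] at h
  have hu : ∀ i, 0 ≤ hU.eigenvalues i := fun i => hpsd.eigenvalues_nonneg i
  have hEv : evalsR (Umat ρ) = hU.eigenvalues := by
    have : Umat ρ = Tᵀ * T := rfl
    rw [evalsR, this, dif_pos hU]
  have hpairs : ∀ j k : Fin 3, j < k → hU.eigenvalues j + hU.eigenvalues k ≤ mval ρ := by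
    intro j k hjk
    have hmem : (j, k) ∈ (Finset.univ.filter (fun p : Fin 3 × Fin 3 => p.1 < p.2)) :=
      Finset.mem_filter.2 ⟨Finset.mem_univ _, hjk⟩
    rw [← hEv]
    exact Finset.le_sup' (fun p : Fin 3 × Fin 3 => evalsR (Umat ρ) p.1 + evalsR (Umat ρ) p.2) hmem
  obtain ⟨p, hp, hval⟩ := Finset.exists_mem_eq_sup'
    (show ((Finset.univ.filter (fun p : Fin 3 × Fin 3 => p.1 < p.2))).Nonempty by decide)
    (fun p : Fin 3 × Fin 3 => evalsR (Umat ρ) p.1 + evalsR (Umat ρ) p.2)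
  have hplt : p.1 < p.2 := (Finset.mem_filter.1 hp).2
  have hmval : mval ρ = hU.eigenvalues p.1 + hU.eigenvalues p.2 := by
    rw [← hEv]
    exact hval
  obtain ⟨a₀, a₀', b₀, b₀', h1, h2, h3, h4, hattain⟩ :=
    attain_main T hU hu (mval ρ) p.1 p.2 (ne_of_lt hplt) hmval
  have hmem2 : (2 * Real.sqrt (mval ρ)) ∈ {x : ℝ | ∃ a a' b b' : Fin 3 → ℝ,
      (∑ i, a i ^ 2 = 1) ∧ (∑ i, a' i ^ 2 = 1) ∧ (∑ i, b i ^ 2 = 1) ∧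
      (∑ i, b' i ^ 2 = 1) ∧ x = ((ρ * BCHSH a a' b b').trace).re} := by
    refine ⟨a₀, a₀', b₀, b₀', h1, h2, h3, h4, ?_⟩
    rw [trace_BCHSH, ← hTdef, hattain]
  have hub : ∀ x ∈ {x : ℝ | ∃ a a' b b' : Fin 3 → ℝ,
      (∑ i, a i ^ 2 = 1) ∧ (∑ i, a' i ^ 2 = 1) ∧ (∑ i, b i ^ 2 = 1) ∧
      (∑ i, b' i ^ 2 = 1) ∧ x = ((ρ * BCHSH a a' b b').trace).re},
      x ≤ 2 * Real.sqrt (mval ρ) := by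
    rintro x ⟨a, a', b, b', ha, ha', hb, hb', rfl⟩
    rw [trace_BCHSH, ← hTdef]
    exact ub_main T (mval ρ) hU hu hpairs a a' b b' ha ha' hb hb'
  exact le_antisymm (csSup_le ⟨_, hmem2⟩ hub)
    (le_csSup ⟨2 * Real.sqrt (mval ρ), hub⟩ hmem2)


end
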